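/- arXiv:1401.1177 — 5 statements merged into one kernel-verified Lean document; each statement's English description precedes it below -/
import Mathlib

section
/- Let $\alpha > 0$, $M \ge 2$ an integer, and $n_i = M^{i-1}$. Then $\widetilde{\w}_{R+1} := \sum_{i=1}^R \w_i(R,M)\, n_i^{-\alpha R} = (-1)^{R-1} M^{-\frac{\alpha R(R-1)}{2}}$. -/
open Finset

noncomputable def Pq (q : ℝ) (k : ℕ) : ℝ := ∏ j ∈ range k, (1 - q^(j+1))

lemma Pq_pos {q : ℝ} (hq0 : 0 < q) (hq1 : q < 1) (k : ℕ) : 0 < Pq q k := by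
  refine Finset.prod_pos fun j _ => ?_
  have : q ^ (j+1) < 1 := pow_lt_one₀ hq0.le hq1 (Nat.succ_ne_zero j)
  linarith

lemma Pq_ne {q : ℝ} (hq0 : 0 < q) (hq1 : q < 1) (k : ℕ) : Pq q k ≠ 0 :=
  (Pq_pos hq0 hq1 k).ne'

lemma Pq_zero (q : ℝ) : Pq q 0 = 1 := by simp [Pq]

lemma Pq_succ (q : ℝ) (k : ℕ) : Pq q (k+1) = Pq q k * (1 - q^(k+1)) := by
  simp [Pq, Finset.prod_range_succ]

lemma Pq_eq {q : ℝ} (k : ℕ) (hk : 1 ≤ k) : Pq q k = Pq q (k-1) * (1 - q^k) := by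
  obtain ⟨m, rfl⟩ := Nat.exists_eq_add_of_le' hk
  simpa using Pq_succ q m

lemma nat_tri (i : ℕ) : (i+1)*i/2 = i*(i-1)/2 + i := by
  rcases i with _ | m
  · rfl
  · obtain ⟨k, hk⟩ := Nat.even_mul_succ_self m
    have h2 : (m+1+1)*(m+1) = m*(m+1) + 2*(m+1) := by ring
    have h3 : (m+1)*(m+1-1) = m*(m+1) := by simp [Nat.mul_comm]
    omega

lemma Ksum {q : ℝ} (hq0 : 0 < q) (hq1 : q < 1) (n : ℕ) (hn : 1 ≤ n) :
    ∑ i ∈ range (n+1), (-1:ℝ)^i * q^(i*(i-1)/2) / (Pq q i * Pq q (n-i)) = 0 := by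
  have hqn : (1 : ℝ) - q^n ≠ 0 := by
    have : q ^ n < 1 := pow_lt_one₀ hq0.le hq1 (by omega)
    linarith
  set A : ℕ → ℝ := fun i =>
    if 1 ≤ i ∧ i ≤ n then (-1:ℝ)^i * q^(i*(i-1)/2) / (Pq q (i-1) * Pq q (n-i)) else 0 with hA
  have key : ∀ i ∈ range (n+1),
      (1 - q^n) * ((-1:ℝ)^i * q^(i*(i-1)/2) / (Pq q i * Pq q (n-i))) = A i - A (i+1) := by
    intro i hi
    have hi' : i ≤ n := by simpa [Nat.lt_succ_iff] using hi
    rcases Nat.eq_zero_or_pos i with rfl | hipos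
    · -- i = 0
      have hA0 : A 0 = 0 := by
        simp only [hA]; rw [if_neg]; omega
      have hA1 : A 1 = (-1:ℝ)^1 * q^(1*(1-1)/2) / (Pq q (1-1) * Pq q (n-1)) := by
        simp only [hA]; rw [if_pos ⟨le_refl 1, hn⟩]
      rw [hA0, hA1]
      simp only [Nat.sub_zero, Nat.sub_self, Nat.zero_mul, Nat.one_mul, Nat.zero_div,
        Nat.mul_zero, pow_zero, pow_one]
      rw [Pq_eq n hn, Pq_zero]
      have h1 := Pq_ne hq0 hq1 (n-1)
      field_simp
      ring
    · rcases eq_or_lt_of_le hi' with rfl | hilt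
      · -- i = n
        have hAn : A i = (-1:ℝ)^i * q^(i*(i-1)/2) / (Pq q (i-1) * Pq q (i-i)) := by
          simp only [hA]; rw [if_pos ⟨hipos, le_refl i⟩]
        have hAn1 : A (i+1) = 0 := by
          simp only [hA]; rw [if_neg]; omega
        rw [hAn, hAn1, Nat.sub_self, Pq_zero, Pq_eq i hipos]
        have h1 := Pq_ne hq0 hq1 (i-1)
        field_simp
        ring
      · -- 1 ≤ i < n
        have hAi : A i = (-1:ℝ)^i * q^(i*(i-1)/2) / (Pq q (i-1) * Pq q (n-i)) := by
          simp only [hA]; rw [if_pos ⟨hipos, hi'⟩]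
        have hAi1 : A (i+1) = (-1:ℝ)^(i+1) * q^((i+1)*(i+1-1)/2) / (Pq q (i+1-1) * Pq q (n-(i+1))) := by
          simp only [hA]; rw [if_pos ⟨by omega, by omega⟩]
        rw [hAi, hAi1]
        simp only [Nat.add_sub_cancel]
        have e1 : Pq q i = Pq q (i-1) * (1 - q^i) := Pq_eq i hipos
        have e2 : Pq q (n-i) = Pq q (n-(i+1)) * (1 - q^(n-i)) := by
          have h := Pq_eq (q := q) (n-i) (by omega)
          have : n - i - 1 = n - (i+1) := by omega
          rwa [this] at h
        have e3 : q^((i+1)*i/2) = q^(i*(i-1)/2) * q^i := by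
          rw [← pow_add, nat_tri]
        have e4 : (1:ℝ) - q^n = 1 - q^i * q^(n-i) := by
          rw [← pow_add]
          congr 2
          omega
        have hb : (1:ℝ) - q^i ≠ 0 := by
          have : q ^ i < 1 := pow_lt_one₀ hq0.le hq1 (by omega)
          linarith
        have hc : (1:ℝ) - q^(n-i) ≠ 0 := by
          have : q ^ (n-i) < 1 := pow_lt_one₀ hq0.le hq1 (by omega)
          linarith
        have h1 := Pq_ne hq0 hq1 (i-1)
        have h2 := Pq_ne hq0 hq1 (n-(i+1))
        rw [e1, e2, e3, e4, pow_succ]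
        field_simp
        ring
  have h0 : (1 - q^n) * ∑ i ∈ range (n+1), (-1:ℝ)^i * q^(i*(i-1)/2) / (Pq q i * Pq q (n-i)) = 0 := by
    rw [Finset.mul_sum, Finset.sum_congr rfl key, Finset.sum_range_sub']
    have hA0 : A 0 = 0 := by simp only [hA]; rw [if_neg]; omega
    have hAn1 : A (n+1) = 0 := by simp only [hA]; rw [if_neg]; omega
    rw [hA0, hAn1, sub_zero]
  exact (mul_eq_zero.mp h0).resolve_left hqn

lemma nat_tri2 (m : ℕ) : (m+1)*(m+1+1)/2 = (m+1)*(m+1-1)/2 + (m+1) := by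
  obtain ⟨k, hk⟩ := Nat.even_mul_succ_self m
  have h2 : (m+1)*(m+1+1) = m*(m+1) + 2*(m+1) := by ring
  have h3 : (m+1)*(m+1-1) = m*(m+1) := by simp [Nat.mul_comm]
  omega

lemma Fsum {q : ℝ} (hq0 : 0 < q) (hq1 : q < 1) (n : ℕ) :
    ∑ i ∈ range (n+1), (-1:ℝ)^i * q^(i*(i+1)/2) / (Pq q i * Pq q (n-i)) = 1 := by
  induction n with
  | zero => simp [Pq]
  | succ n ih =>
    have step : ∀ i ∈ range (n+1),
        (-1:ℝ)^i * q^(i*(i+1)/2) / (Pq q i * Pq q (n+1-i)) =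
        (-1:ℝ)^i * q^(i*(i+1)/2) / (Pq q i * Pq q (n-i)) +
        ((-1:ℝ)^i * q^(i*(i-1)/2) / (Pq q i * Pq q (n+1-i))) * q^(n+1) := by
      intro i hi
      have hi' : i ≤ n := by simpa [Nat.lt_succ_iff] using hi
      have e2 : Pq q (n+1-i) = Pq q (n-i) * (1 - q^(n+1-i)) := by
        have h := Pq_eq (q := q) (n+1-i) (by omega)
        have h' : n+1-i-1 = n-i := by omega
        rwa [h'] at h
      have e3 : q^(i*(i-1)/2) * q^(n+1) = q^(i*(i+1)/2) * q^(n+1-i) := by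
        rw [← pow_add, ← pow_add]
        congr 1
        have h1 := nat_tri i
        have h2 : i*(i+1) = (i+1)*i := by ring
        omega
      have hu : (1:ℝ) - q^(n+1-i) ≠ 0 := by
        have : q ^ (n+1-i) < 1 := pow_lt_one₀ hq0.le hq1 (by omega)
        linarith
      have h1 := Pq_ne hq0 hq1 i
      have h2 := Pq_ne hq0 hq1 (n-i)
      rw [e2, div_mul_eq_mul_div, mul_assoc, e3]
      field_simp
      ring
    rw [Finset.sum_range_succ, Finset.sum_congr rfl step, Finset.sum_add_distrib, ih]
    have last : (-1:ℝ)^(n+1) * q^((n+1)*(n+1+1)/2) / (Pq q (n+1) * Pq q (n+1-(n+1))) =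
        ((-1:ℝ)^(n+1) * q^((n+1)*(n+1-1)/2) / (Pq q (n+1) * Pq q (n+1-(n+1)))) * q^(n+1) := by
      rw [div_mul_eq_mul_div, mul_assoc, ← pow_add]
      congr 3
      exact nat_tri2 n
    rw [last]
    have collect : (∑ i ∈ range (n+1), ((-1:ℝ)^i * q^(i*(i-1)/2) / (Pq q i * Pq q (n+1-i))) * q^(n+1))
        + ((-1:ℝ)^(n+1) * q^((n+1)*(n+1-1)/2) / (Pq q (n+1) * Pq q (n+1-(n+1)))) * q^(n+1)
        = (∑ i ∈ range (n+1+1), (-1:ℝ)^i * q^(i*(i-1)/2) / (Pq q i * Pq q (n+1-i))) * q^(n+1) := by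
      conv_rhs => rw [Finset.sum_mul, Finset.sum_range_succ]
    rw [add_assoc, collect, Ksum hq0 hq1 (n+1) (by omega), zero_mul, add_zero]

lemma nat_split (i j : ℕ) : j*(j+1)/2 + i*(i+j+1) = (i+j)*(i+j+1)/2 + i*(i+1)/2 := by
  obtain ⟨a, ha⟩ := Nat.even_mul_succ_self j
  obtain ⟨b, hb⟩ := Nat.even_mul_succ_self i
  obtain ⟨c, hc⟩ := Nat.even_mul_succ_self (i+j)
  have h4 : j*(j+1) + 2*(i*(i+j+1)) = (i+j)*(i+j+1) + i*(i+1) := by ring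
  omega


/-- For geometric refiners `n i = M ^ i` (Lean index `i` = paper index `i+1`),
the weighted sum of the `n_i^{-αR}` equals `(-1)^{R-1} M^{-αR(R-1)/2}`. -/
theorem weights_geometric_moment (α : ℝ) (hα : 0 < α) (M R : ℕ)
    (hM : 2 ≤ M) (hR : 1 ≤ R) :
    ∑ i ∈ range R,
        ((-1 : ℝ) ^ (R - 1 - i) *
              (M : ℝ) ^ (-(α / 2) * (((R - 1 - i) * (R - i) : ℕ) : ℝ)) /
            ((∏ j ∈ range i, (1 - (M : ℝ) ^ (-((j + 1 : ℕ) : ℝ) * α))) *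
              ∏ j ∈ range (R - 1 - i), (1 - (M : ℝ) ^ (-((j + 1 : ℕ) : ℝ) * α)))) *
          ((M : ℝ) ^ (i : ℕ)) ^ (-(α * R)) =
      (-1 : ℝ) ^ (R - 1) * (M : ℝ) ^ (-(α * ((R * (R - 1) : ℕ) : ℝ) / 2)) := by
  obtain ⟨n, rfl⟩ := Nat.exists_eq_add_of_le' hR
  have hM0 : (0:ℝ) < M := by
    have : (2:ℝ) ≤ M := by exact_mod_cast hM
    linarith
  have hM1 : (1:ℝ) < M := by
    have : (2:ℝ) ≤ M := by exact_mod_cast hM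
    linarith
  set q := (M:ℝ) ^ (-α) with hqdef
  have hq0 : 0 < q := Real.rpow_pos_of_pos hM0 _
  have hq1 : q < 1 := Real.rpow_lt_one_of_one_lt_of_neg hM1 (by linarith)
  have hqpow : ∀ k : ℕ, (M:ℝ) ^ (-α * (k:ℝ)) = q ^ k := by
    intro k
    rw [Real.rpow_mul hM0.le, Real.rpow_natCast]
  have hprod : ∀ k, ∏ j ∈ range k, (1 - (M:ℝ)^(-((j+1:ℕ):ℝ) * α)) = Pq q k := by
    intro k
    refine Finset.prod_congr rfl fun j _ => ?_
    congr 1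
    rw [show -((j+1:ℕ):ℝ)*α = -α*((j+1:ℕ):ℝ) by ring, hqpow]
  simp only [Nat.add_sub_cancel]
  have key : ∀ i ∈ range (n+1),
      ((-1 : ℝ) ^ (n - i) *
              (M : ℝ) ^ (-(α / 2) * (((n - i) * (n + 1 - i) : ℕ) : ℝ)) /
            ((∏ j ∈ range i, (1 - (M : ℝ) ^ (-((j + 1 : ℕ) : ℝ) * α))) *
              ∏ j ∈ range (n - i), (1 - (M : ℝ) ^ (-((j + 1 : ℕ) : ℝ) * α)))) *
          ((M : ℝ) ^ (i : ℕ)) ^ (-(α * (n+1 : ℕ))) =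
      ((-1:ℝ)^n * q^(n*(n+1)/2)) * ((-1:ℝ)^i * q^(i*(i+1)/2) / (Pq q i * Pq q (n-i))) := by
    intro i hi
    have hi' : i ≤ n := by simpa [Nat.lt_succ_iff] using hi
    rw [hprod i, hprod (n-i)]
    have hb : (M:ℝ)^(-(α/2) * (((n-i)*(n+1-i) : ℕ):ℝ)) = q^((n-i)*(n+1-i)/2) := by
      have e1 : (n-i)*(n+1-i) = (n-i)*((n-i)+1) := by congr 1; omega
      have he : (n-i)*(n+1-i) = 2*(((n-i)*(n+1-i))/2) := by
        obtain ⟨a, ha⟩ := Nat.even_mul_succ_self (n-i)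
        omega
      rw [← hqpow (((n-i)*(n+1-i))/2)]
      congr 1
      have hcast : ((((n-i)*(n+1-i)) : ℕ) : ℝ) = 2 * (((((n-i)*(n+1-i))/2) : ℕ) : ℝ) := by
        exact_mod_cast congrArg (Nat.cast : ℕ → ℝ) he
      rw [hcast]; ring
    have hc : ((M:ℝ)^(i:ℕ))^(-(α*((n+1:ℕ):ℝ))) = q^(i*(n+1)) := by
      rw [← Real.rpow_natCast (M:ℝ) i, ← Real.rpow_mul hM0.le, ← hqpow (i*(n+1))]
      congr 1
      push_cast; ring
    rw [hb, hc]
    have hii : ((-1:ℝ)^i) * ((-1)^i) = 1 := by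
      rw [← mul_pow]; norm_num
    have hsign : (-1:ℝ)^(n-i) = (-1)^n * (-1)^i := by
      calc (-1:ℝ)^(n-i) = (-1)^(n-i) * (((-1:ℝ)^i) * ((-1)^i)) := by rw [hii, mul_one]
        _ = ((-1)^(n-i) * (-1)^i) * (-1)^i := by ring
        _ = (-1)^n * (-1)^i := by rw [← pow_add, show n-i+i = n by omega]
    have hexp : (n-i)*(n+1-i)/2 + i*(n+1) = n*(n+1)/2 + i*(i+1)/2 := by
      have hs := nat_split i (n-i)
      have e1 : (n-i)*(n+1-i) = (n-i)*((n-i)+1) := by congr 1; omega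
      have e2 : i*(i+(n-i)+1) = i*(n+1) := by congr 1; omega
      have e3 : (i+(n-i))*(i+(n-i)+1) = n*(n+1) := by congr 1 <;> omega
      omega
    have hpow : q^((n-i)*(n+1-i)/2) * q^(i*(n+1)) = q^(n*(n+1)/2) * q^(i*(i+1)/2) := by
      rw [← pow_add, ← pow_add, hexp]
    have hX := Pq_ne hq0 hq1 i
    have hY := Pq_ne hq0 hq1 (n-i)
    rw [hsign, div_mul_eq_mul_div, mul_assoc, hpow]
    ring
  rw [Finset.sum_congr rfl key, ← Finset.mul_sum, Fsum hq0 hq1 n, mul_one]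
  have hrhs : (M:ℝ)^(-(α * ((((n+1)*n) : ℕ):ℝ) / 2)) = q^(n*(n+1)/2) := by
    have he : (n+1)*n = 2*(n*(n+1)/2) := by
      obtain ⟨a, ha⟩ := Nat.even_mul_succ_self n
      have h3 : (n+1)*n = n*(n+1) := by ring
      omega
    rw [← hqpow (n*(n+1)/2)]
    congr 1
    have hcast : ((((n+1)*n) : ℕ):ℝ) = 2 * (((n*(n+1)/2) : ℕ):ℝ) := by
      exact_mod_cast congrArg (Nat.cast : ℕ → ℝ) he
    rw [hcast]; ring
  rw [hrhs]
end

section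
/- Let $\alpha > 0$, $M \ge 2$ an integer, $R \ge 1$, and $\w_i(R,M)$ the Richardson–Romberg weights for $n_i = M^{i-1}$. Set $\pi_{\alpha,M} = \prod_{k \ge 1}(1 - M^{-\alpha k})$. Then $\sum_{i=1}^{R-1} |\w_i(R,M)| \le \frac{M^{-\alpha}}{\pi_{\alpha,M}^2}\sum_{k \ge 0} M^{-\alpha\frac{k(k+3)}{2}}$ and $1 \le \w_R(R,M) \le \frac{1}{\pi_{\alpha,M}}$, uniformly in $R$. -/
open Finset

/-- Richardson–Romberg weight `w_{i+1}(R,M)` for geometric refiners `n_i = M^{i-1}`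
(Lean index `i` corresponds to paper index `i+1`). -/
noncomputable def rrWeight (α : ℝ) (M R i : ℕ) : ℝ :=
  (-1 : ℝ) ^ (R - 1 - i) *
      (M : ℝ) ^ (-(α / 2) * (((R - 1 - i) * (R - i) : ℕ) : ℝ)) /
    ((∏ j ∈ range i, (1 - (M : ℝ) ^ (-((j + 1 : ℕ) : ℝ) * α))) *
      ∏ j ∈ range (R - 1 - i), (1 - (M : ℝ) ^ (-((j + 1 : ℕ) : ℝ) * α)))

/-- The infinite product `π_{α,M} = ∏_{k ≥ 1} (1 - M^{-αk})`. -/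
noncomputable def piAlphaM (α : ℝ) (M : ℕ) : ℝ :=
  ∏' k : ℕ, (1 - (M : ℝ) ^ (-(α * ((k + 1 : ℕ) : ℝ))))

/-!
With `q = M^{-α} ∈ (0, 1)` and `P n = ∏_{j < n} (1 - q^{j+1})`, the weights are
`w_{i+1} = (-1)^{k+1} q^{(k+1)(k+2)/2} / (P i * P (k+1))` where `k + 1 = R - 1 - i`, and
`w_R = 1 / P (R - 1)`. The partial products decrease from `P 0 = 1` to `π_{α,M} > 0`, so every
denominator lies between `π_{α,M}^2` and `1`. Writing `(k+1)(k+2)/2 = 1 + k(k+3)/2` and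
reindexing the sum by `k` gives the first bound; the series converges because its terms are
dominated by `q^k`.
-/

open Real

lemma tprod_one_sub_pos {ι : Type*} {f : ι → ℝ} (hf1 : ∀ i, f i < 1) (hf : Summable f) :
    0 < ∏' i, (1 - f i) := by
  have hlog : Summable fun i => log (1 - f i) := by
    simpa [sub_eq_add_neg] using summable_log_one_add_of_summable hf.neg
  rw [← rexp_tsum_eq_tprod (fun i => sub_pos.2 (hf1 i)) hlog]
  exact exp_pos _

lemma tprod_one_sub_le_prod_range {f : ℕ → ℝ} (hf0 : ∀ i, 0 ≤ f i) (hf1 : ∀ i, f i ≤ 1)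
    (hf : Summable f) (n : ℕ) : ∏' i, (1 - f i) ≤ ∏ i ∈ range n, (1 - f i) := by
  have hmul : Multipliable fun i => 1 - f i := by
    simpa [sub_eq_add_neg] using Real.multipliable_one_add_of_summable hf.neg
  refine Antitone.le_of_tendsto (antitone_nat_of_succ_le fun m => ?_)
    hmul.tendsto_prod_tprod_nat n
  rw [prod_range_succ]
  exact mul_le_of_le_one_right (prod_nonneg fun i _ => sub_nonneg.2 (hf1 i))
    (sub_le_self _ (hf0 m))

section PowSucc

variable {q : ℝ}

lemma summable_pow_succ (hq0 : 0 ≤ q) (hq1 : q < 1) : Summable fun k : ℕ => q ^ (k + 1) :=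
  (summable_nat_add_iff 1).2 (summable_geometric_of_lt_one hq0 hq1)

lemma prod_one_sub_pow_succ_pos (hq0 : 0 ≤ q) (hq1 : q < 1) (n : ℕ) :
    0 < ∏ j ∈ range n, (1 - q ^ (j + 1)) :=
  prod_pos fun j _ => sub_pos.2 (pow_lt_one₀ hq0 hq1 j.succ_ne_zero)

lemma prod_one_sub_pow_succ_le_one (hq0 : 0 ≤ q) (hq1 : q < 1) (n : ℕ) :
    ∏ j ∈ range n, (1 - q ^ (j + 1)) ≤ 1 :=
  prod_le_one (fun _ _ => sub_nonneg.2 (pow_le_one₀ hq0 hq1.le))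
    fun _ _ => sub_le_self _ (pow_nonneg hq0 _)

end PowSucc

section Weights

variable {α : ℝ} {M : ℕ}

lemma natCast_rpow_neg_pos (hM : 1 < M) (α : ℝ) : 0 < (M : ℝ) ^ (-α) :=
  rpow_pos_of_pos (by positivity) _

lemma natCast_rpow_neg_lt_one (hα : 0 < α) (hM : 1 < M) : (M : ℝ) ^ (-α) < 1 :=
  rpow_lt_one_of_one_lt_of_neg (by exact_mod_cast hM) (neg_neg_of_pos hα)

lemma natCast_rpow_neg_mul (α : ℝ) (M n : ℕ) :
    (M : ℝ) ^ (-(α * n)) = ((M : ℝ) ^ (-α)) ^ n := by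
  rw [← rpow_mul_natCast (Nat.cast_nonneg M), neg_mul]

lemma piAlphaM_eq_tprod (α : ℝ) (M : ℕ) :
    piAlphaM α M = ∏' k : ℕ, (1 - ((M : ℝ) ^ (-α)) ^ (k + 1)) := by
  simp only [piAlphaM, natCast_rpow_neg_mul]

lemma prod_range_one_sub_rpow_eq (α : ℝ) (M n : ℕ) :
    ∏ j ∈ range n, (1 - (M : ℝ) ^ (-((j + 1 : ℕ) : ℝ) * α)) =
      ∏ j ∈ range n, (1 - ((M : ℝ) ^ (-α)) ^ (j + 1)) := by
  refine prod_congr rfl fun j _ => ?_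
  rw [neg_mul, mul_comm _ α, natCast_rpow_neg_mul]

lemma piAlphaM_pos (hα : 0 < α) (hM : 1 < M) : 0 < piAlphaM α M := by
  have hq0 := (natCast_rpow_neg_pos hM α).le
  have hq1 := natCast_rpow_neg_lt_one hα hM
  rw [piAlphaM_eq_tprod]
  exact tprod_one_sub_pos (fun k => pow_lt_one₀ hq0 hq1 k.succ_ne_zero) (summable_pow_succ hq0 hq1)

lemma piAlphaM_le_prod_range (hα : 0 < α) (hM : 1 < M) (n : ℕ) :
    piAlphaM α M ≤ ∏ j ∈ range n, (1 - ((M : ℝ) ^ (-α)) ^ (j + 1)) := by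
  have hq0 := (natCast_rpow_neg_pos hM α).le
  have hq1 := natCast_rpow_neg_lt_one hα hM
  rw [piAlphaM_eq_tprod]
  exact tprod_one_sub_le_prod_range (fun _ => pow_nonneg hq0 _)
    (fun _ => pow_le_one₀ hq0 hq1.le) (summable_pow_succ hq0 hq1) n

lemma rrWeight_last (α : ℝ) (M R : ℕ) :
    rrWeight α M R (R - 1) = (∏ j ∈ range (R - 1), (1 - ((M : ℝ) ^ (-α)) ^ (j + 1)))⁻¹ := by
  simp [rrWeight, ← prod_range_one_sub_rpow_eq]

lemma abs_rrWeight_add_two_le (hα : 0 < α) (hM : 1 < M) (i k : ℕ) :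
    |rrWeight α M (i + k + 2) i| ≤
      (M : ℝ) ^ (-α) / piAlphaM α M ^ 2 * (M : ℝ) ^ (-(α * ((k * (k + 3) : ℕ) : ℝ) / 2)) := by
  have hq0 := (natCast_rpow_neg_pos hM α).le
  have hq1 := natCast_rpow_neg_lt_one hα hM
  have hπ := piAlphaM_pos hα hM
  have hk1 : i + k + 2 - 1 - i = k + 1 := by omega
  have hk2 : i + k + 2 - i = k + 2 := by omega
  have hexp : (M : ℝ) ^ (-(α / 2) * (((k + 1) * (k + 2) : ℕ) : ℝ)) =
      (M : ℝ) ^ (-α) * (M : ℝ) ^ (-(α * ((k * (k + 3) : ℕ) : ℝ) / 2)) := by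
    rw [← rpow_add (by positivity)]
    push_cast
    ring_nf
  rw [rrWeight, hk1, hk2, hexp, prod_range_one_sub_rpow_eq, prod_range_one_sub_rpow_eq, abs_div,
    abs_mul, abs_pow, abs_neg, abs_one, one_pow, one_mul, abs_of_nonneg (by positivity),
    abs_of_pos (mul_pos (prod_one_sub_pow_succ_pos hq0 hq1 _)
      (prod_one_sub_pow_succ_pos hq0 hq1 _)), div_mul_eq_mul_div, sq]
  exact div_le_div_of_nonneg_left (by positivity) (by positivity)
    (mul_le_mul (piAlphaM_le_prod_range hα hM i) (piAlphaM_le_prod_range hα hM (k + 1)) hπ.le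
      (prod_one_sub_pow_succ_pos hq0 hq1 i).le)

lemma summable_rpow_neg_mul_triangular (hα : 0 < α) (hM : 1 < M) :
    Summable fun k : ℕ => (M : ℝ) ^ (-(α * ((k * (k + 3) : ℕ) : ℝ) / 2)) := by
  refine Summable.of_nonneg_of_le (fun _ => (natCast_rpow_neg_pos hM _).le) (fun k => ?_)
    (summable_geometric_of_lt_one (natCast_rpow_neg_pos hM α).le (natCast_rpow_neg_lt_one hα hM))
  rw [← natCast_rpow_neg_mul]
  refine rpow_le_rpow_of_exponent_le (by exact_mod_cast hM.le) ?_
  have : (2 * k : ℝ) ≤ ((k * (k + 3) : ℕ) : ℝ) := by push_cast; nlinarith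
  nlinarith

end Weights

theorem rrWeight_bounds_general (α : ℝ) (hα : 0 < α) (M R : ℕ) (hM : 2 ≤ M) :
    (∑ i ∈ range (R - 1), |rrWeight α M R i| ≤
        (M : ℝ) ^ (-α) / (piAlphaM α M) ^ 2 *
          ∑' k : ℕ, (M : ℝ) ^ (-(α * ((k * (k + 3) : ℕ) : ℝ) / 2))) ∧
      1 ≤ rrWeight α M R (R - 1) ∧ rrWeight α M R (R - 1) ≤ 1 / piAlphaM α M := by
  have hM1 : 1 < M := hM
  have hq0 := (natCast_rpow_neg_pos hM1 α).le
  have hq1 := natCast_rpow_neg_lt_one hα hM1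
  set c := (M : ℝ) ^ (-α) / piAlphaM α M ^ 2
  set t : ℕ → ℝ := fun k => (M : ℝ) ^ (-(α * ((k * (k + 3) : ℕ) : ℝ) / 2))
  refine ⟨?_, ?_, ?_⟩
  · calc ∑ i ∈ range (R - 1), |rrWeight α M R i|
        ≤ ∑ i ∈ range (R - 1), c * t (R - 1 - 1 - i) := sum_le_sum fun i hi => by
          have h := abs_rrWeight_add_two_le hα hM1 i (R - 1 - 1 - i)
          rwa [show i + (R - 1 - 1 - i) + 2 = R by have := mem_range.1 hi; omega] at h
      _ = c * ∑ k ∈ range (R - 1), t k := by rw [← mul_sum, Finset.sum_range_reflect]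
      _ ≤ c * ∑' k, t k := by
          gcongr
          exact (summable_rpow_neg_mul_triangular hα hM1).sum_le_tsum _
            fun _ _ => (natCast_rpow_neg_pos hM1 _).le
  · rw [rrWeight_last]
    exact (one_le_inv₀ (prod_one_sub_pow_succ_pos hq0 hq1 _)).2
      (prod_one_sub_pow_succ_le_one hq0 hq1 _)
  · rw [rrWeight_last, one_div]
    exact inv_anti₀ (piAlphaM_pos hα hM1) (piAlphaM_le_prod_range hα hM1 _)

theorem rrWeight_bounds (α : ℝ) (hα : 0 < α) (M R : ℕ) (hM : 2 ≤ M) (hR : 1 ≤ R) :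
    (∑ i ∈ range (R - 1), |rrWeight α M R i| ≤
        (M : ℝ) ^ (-α) / (piAlphaM α M) ^ 2 *
          ∑' k : ℕ, (M : ℝ) ^ (-(α * ((k * (k + 3) : ℕ) : ℝ) / 2))) ∧
      1 ≤ rrWeight α M R (R - 1) ∧ rrWeight α M R (R - 1) ≤ 1 / piAlphaM α M :=
  rrWeight_bounds_general α hα M R hM
end

section
/- For $\alpha > 0$ and integers $R \ge 1$, $M \ge 2$, the cumulative weights $\W_j = \sum_{i=j}^R \w_i(R,M)$ satisfy $\W_1 = 1$ and $\max_{1 \le j \le R}|\W_j| \le \W_\alpha(M) := \frac{M^{-\alpha}}{\pi_{\alpha,M}^2}\sum_{k\ge 0} M^{-\alpha\frac{k(k+3)}{2}} + \frac{1}{\pi_{\alpha,M}}$, a bound independent of $R$. -/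
/-! With `q = M^{-α}` and `(q;q)_n = ∏_{k=1}^n (1 - q^k)`, the weight `w_{i+1}(R,M)` is
`(-1)^j q^{j(j+1)/2} / ((q;q)_i (q;q)_j)` with `i + j = R - 1`, so `W_1` is the sum `S_{R-1}` of
these terms over an antidiagonal `i + j = n`. That `S_n = 1` is a case of the `q`-binomial
theorem, proved by induction: for `i + j = n + 1` split `1 - q^{n+1} = (1 - q^i) + q^i (1 - q^j)`;
each part cancels one factor of a Pochhammer symbol, and `(1 - q^{n+1}) S_{n+1}` becomes
`S_n - q^{n+1} S_n`.

For the bound, `|W_j| ≤ ∑_i |w_i|`, and every `(q;q)_m ≥ (q;q)_∞ = π_{α,M}` because the partial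
products decrease. The term with `j = 0` is then at most `1/π`, and the one with `j = k + 1` at
most `q^{(k+1)(k+2)/2} / π² = q · q^{k(k+3)/2} / π²`. -/

open Finset

/-- Cumulative weight `W_{j+1} = ∑_{i = j+1}^{R} w_i(R,M)` (Lean index `j`
corresponds to paper index `j+1`). -/
noncomputable def rrCumWeight (α : ℝ) (M R j : ℕ) : ℝ :=
  ∑ i ∈ Ico j R, rrWeight α M R i

open Finset.Nat

section Field

variable {K : Type*} [Field K] {q : K}

def qPochhammer (q : K) (n : ℕ) : K :=
  ∏ j ∈ range n, (1 - q ^ (j + 1))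

def rrCoeff (q : K) (i j : ℕ) : K :=
  (-1) ^ j * q ^ (j + 1).choose 2 / (qPochhammer q i * qPochhammer q j)

lemma qPochhammer_succ (q : K) (n : ℕ) :
    qPochhammer q (n + 1) = qPochhammer q n * (1 - q ^ (n + 1)) :=
  prod_range_succ _ _

@[simp]
lemma qPochhammer_zero (q : K) : qPochhammer q 0 = 1 :=
  prod_range_zero _

variable (hq : ∀ m : ℕ, 1 - q ^ (m + 1) ≠ 0)
include hq

lemma qPochhammer_ne_zero (n : ℕ) : qPochhammer q n ≠ 0 :=
  prod_ne_zero_iff.2 fun m _ => hq m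

lemma one_sub_pow_mul_rrCoeff_succ_left (i j : ℕ) :
    (1 - q ^ (i + 1)) * rrCoeff q (i + 1) j = rrCoeff q i j := by
  have := qPochhammer_ne_zero hq
  rw [rrCoeff, rrCoeff, qPochhammer_succ]
  field_simp [hq i]

lemma pow_mul_one_sub_pow_mul_rrCoeff_succ_right (i j : ℕ) :
    q ^ i * (1 - q ^ (j + 1)) * rrCoeff q i (j + 1) = -q ^ (i + j + 1) * rrCoeff q i j := by
  have := qPochhammer_ne_zero hq
  rw [rrCoeff, rrCoeff, qPochhammer_succ, Nat.choose_succ_succ', Nat.choose_one_right]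
  field_simp [hq j]
  ring

theorem sum_antidiagonal_rrCoeff (n : ℕ) : ∑ p ∈ antidiagonal n, rrCoeff q p.1 p.2 = 1 := by
  induction n with
  | zero => simp [rrCoeff, qPochhammer]
  | succ n ih =>
    have hsplit : (1 - q ^ (n + 1)) * ∑ p ∈ antidiagonal (n + 1), rrCoeff q p.1 p.2 =
        ∑ p ∈ antidiagonal (n + 1), (1 - q ^ p.1) * rrCoeff q p.1 p.2 +
          ∑ p ∈ antidiagonal (n + 1), q ^ p.1 * (1 - q ^ p.2) * rrCoeff q p.1 p.2 := by
      rw [mul_sum, ← sum_add_distrib]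
      refine sum_congr rfl fun p hp => ?_
      rw [← mem_antidiagonal.1 hp, pow_add]
      ring
    have hleft : ∑ p ∈ antidiagonal (n + 1), (1 - q ^ p.1) * rrCoeff q p.1 p.2 = 1 := by
      simp [sum_antidiagonal_succ, one_sub_pow_mul_rrCoeff_succ_left hq, ih]
    have hright : ∑ p ∈ antidiagonal (n + 1), q ^ p.1 * (1 - q ^ p.2) * rrCoeff q p.1 p.2 =
        -q ^ (n + 1) := by
      rw [sum_antidiagonal_succ']
      simp only [pow_zero, sub_self, mul_zero, zero_mul, zero_add,
        pow_mul_one_sub_pow_mul_rrCoeff_succ_right hq]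
      rw [← sum_antidiagonal_subst (f := fun p m => -q ^ (m + 1) * rrCoeff q p.1 p.2),
        ← mul_sum, ih, mul_one]
    exact mul_left_cancel₀ (hq n) (hsplit.trans (by rw [hleft, hright]; ring))

end Field

section Real

variable {q : ℝ}

noncomputable def qPochhammerInf (q : ℝ) : ℝ :=
  ∏' k : ℕ, (1 - q ^ (k + 1))

variable (hq0 : 0 ≤ q) (hq1 : q < 1)
include hq0 hq1

lemma one_sub_pow_succ_pos (m : ℕ) : 0 < 1 - q ^ (m + 1) :=
  sub_pos.2 (pow_lt_one₀ hq0 hq1 m.succ_ne_zero)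

lemma qPochhammer_pos (n : ℕ) : 0 < qPochhammer q n :=
  prod_pos fun m _ => one_sub_pow_succ_pos hq0 hq1 m

lemma summable_norm_neg_pow_succ : Summable fun n : ℕ => ‖-q ^ (n + 1)‖ := by
  simpa [abs_of_nonneg hq0] using
    (summable_nat_add_iff 1).2 (summable_geometric_of_lt_one hq0 hq1)

lemma qPochhammerInf_pos : 0 < qPochhammerInf q := by
  have hne : ∏' k : ℕ, (1 + -q ^ (k + 1)) ≠ 0 :=
    tprod_one_add_ne_zero_of_summable (fun m => by simpa [← sub_eq_add_neg] using
      (one_sub_pow_succ_pos hq0 hq1 m).ne') (summable_norm_neg_pow_succ hq0 hq1)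
  simp only [← sub_eq_add_neg] at hne
  exact (tprod_nonneg fun m => (one_sub_pow_succ_pos hq0 hq1 m).le).lt_of_ne' hne

lemma qPochhammerInf_le_qPochhammer (n : ℕ) : qPochhammerInf q ≤ qPochhammer q n := by
  have hmul : Multipliable fun k : ℕ => 1 - q ^ (k + 1) := by
    simpa [← sub_eq_add_neg] using
      multipliable_one_add_of_summable (summable_norm_neg_pow_succ hq0 hq1)
  refine Antitone.le_of_tendsto (antitone_nat_of_succ_le fun m => ?_)
    hmul.tendsto_prod_tprod_nat n
  change qPochhammer q (m + 1) ≤ qPochhammer q m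
  rw [qPochhammer_succ]
  exact mul_le_of_le_one_right (qPochhammer_pos hq0 hq1 m).le (by simp [hq0])

lemma abs_rrCoeff_le (i j : ℕ) :
    |rrCoeff q i j| ≤ q ^ (j + 1).choose 2 / qPochhammerInf q ^ 2 := by
  have hP := qPochhammer_pos hq0 hq1
  have hπ := qPochhammerInf_pos hq0 hq1
  rw [rrCoeff, abs_div, abs_mul, abs_pow, abs_neg, abs_one, one_pow, one_mul,
    abs_of_nonneg (pow_nonneg hq0 _), abs_of_pos (mul_pos (hP i) (hP j)), sq]
  exact div_le_div_of_nonneg_left (pow_nonneg hq0 _) (mul_pos hπ hπ) <|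
    mul_le_mul (qPochhammerInf_le_qPochhammer hq0 hq1 i)
      (qPochhammerInf_le_qPochhammer hq0 hq1 j) hπ.le (hP i).le

lemma abs_rrCoeff_zero_right_le (i : ℕ) : |rrCoeff q i 0| ≤ 1 / qPochhammerInf q := by
  have hP := qPochhammer_pos hq0 hq1 i
  rw [rrCoeff, qPochhammer_zero, mul_one, pow_zero, one_mul,
    Nat.choose_eq_zero_of_lt (by norm_num), pow_zero, abs_of_pos (one_div_pos.2 hP)]
  exact one_div_le_one_div_of_le (qPochhammerInf_pos hq0 hq1)
    (qPochhammerInf_le_qPochhammer hq0 hq1 i)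

lemma summable_pow_add_choose : Summable fun k : ℕ => q ^ (k + (k + 1).choose 2) :=
  (summable_geometric_of_lt_one hq0 hq1).of_nonneg_of_le (fun _ => pow_nonneg hq0 _)
    fun _ => pow_le_pow_of_le_one hq0 hq1.le (Nat.le_add_right _ _)

theorem sum_antidiagonal_abs_rrCoeff_le (n : ℕ) :
    ∑ p ∈ antidiagonal n, |rrCoeff q p.1 p.2| ≤
      q / qPochhammerInf q ^ 2 * ∑' k : ℕ, q ^ (k + (k + 1).choose 2) +
        1 / qPochhammerInf q := by
  rw [← sum_antidiagonal_swap, sum_antidiagonal_eq_sum_range_succ_mk, sum_range_succ']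
  simp only [Prod.swap_prod_mk, Nat.sub_zero]
  gcongr ?_ + ?_
  · calc ∑ k ∈ range n, |rrCoeff q (n - (k + 1)) (k + 1)|
        ≤ ∑ k ∈ range n, q / qPochhammerInf q ^ 2 * q ^ (k + (k + 1).choose 2) := by
          refine sum_le_sum fun k _ => (abs_rrCoeff_le hq0 hq1 _ _).trans_eq ?_
          rw [Nat.choose_succ_succ', Nat.choose_one_right, add_comm k, add_assoc, pow_add]
          ring
      _ ≤ q / qPochhammerInf q ^ 2 * ∑' k : ℕ, q ^ (k + (k + 1).choose 2) := by
          rw [← mul_sum]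
          have := qPochhammerInf_pos hq0 hq1
          gcongr
          exact (summable_pow_add_choose hq0 hq1).sum_le_tsum _ fun _ _ => pow_nonneg hq0 _
  · exact abs_rrCoeff_zero_right_le hq0 hq1 n

end Real

section Conversion

variable (α : ℝ) (M : ℕ)

lemma rrWeight_eq_rrCoeff (R i : ℕ) :
    rrWeight α M R i = rrCoeff ((M : ℝ) ^ (-α)) i (R - 1 - i) := by
  have hM : (0 : ℝ) ≤ M := Nat.cast_nonneg M
  have hexp : (R - 1 - i) * (R - i) = (R - 1 - i) * (R - 1 - i + 1) := by
    rcases Nat.lt_or_ge i R with h | h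
    · congr 1; omega
    · rw [Nat.sub_eq_zero_of_le (by omega : R - 1 ≤ i), zero_mul, zero_mul]
  have hfac (j : ℕ) :
      (M : ℝ) ^ (-((j + 1 : ℕ) : ℝ) * α) = ((M : ℝ) ^ (-α)) ^ (j + 1) := by
    rw [← Real.rpow_mul_natCast hM, mul_comm, neg_mul_comm]
  rw [rrWeight, rrCoeff, qPochhammer, qPochhammer, ← Real.rpow_mul_natCast hM, hexp]
  simp only [hfac]
  congr 3
  push_cast [Nat.cast_choose_two]
  ring

lemma piAlphaM_eq_qPochhammerInf : piAlphaM α M = qPochhammerInf ((M : ℝ) ^ (-α)) :=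
  tprod_congr fun k => by
    rw [← Real.rpow_mul_natCast (Nat.cast_nonneg M), neg_mul_eq_neg_mul]

lemma natCast_rpow_neg_mul_div_two_eq_pow (k : ℕ) :
    (M : ℝ) ^ (-(α * ((k * (k + 3) : ℕ) : ℝ) / 2)) =
      ((M : ℝ) ^ (-α)) ^ (k + (k + 1).choose 2) := by
  rw [← Real.rpow_mul_natCast (Nat.cast_nonneg M)]
  congr 1
  push_cast [Nat.cast_choose_two]
  ring

end Conversion

theorem rrCumWeight_bounds (α : ℝ) (hα : 0 < α) (M R : ℕ) (hM : 2 ≤ M)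
    (hR : 1 ≤ R) :
    rrCumWeight α M R 0 = 1 ∧
      ∀ j < R, |rrCumWeight α M R j| ≤
        (M : ℝ) ^ (-α) / (piAlphaM α M) ^ 2 *
            (∑' k : ℕ, (M : ℝ) ^ (-(α * ((k * (k + 3) : ℕ) : ℝ) / 2))) +
          1 / piAlphaM α M := by
  obtain ⟨n, rfl⟩ : ∃ n, R = n + 1 := ⟨R - 1, by omega⟩
  set q : ℝ := (M : ℝ) ^ (-α)
  have hq0 : 0 ≤ q := Real.rpow_nonneg (Nat.cast_nonneg M) _
  have hq1 : q < 1 :=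
    Real.rpow_lt_one_of_one_lt_of_neg (by exact_mod_cast hM) (neg_lt_zero.2 hα)
  have hw : ∀ i, rrWeight α M (n + 1) i = rrCoeff q i (n - i) := fun i => by
    rw [rrWeight_eq_rrCoeff, Nat.add_sub_cancel]
  have hsum : ∀ f : ℝ → ℝ, ∑ i ∈ range (n + 1), f (rrWeight α M (n + 1) i) =
      ∑ p ∈ antidiagonal n, f (rrCoeff q p.1 p.2) := fun f => by
    simp only [hw, sum_antidiagonal_eq_sum_range_succ fun i j => f (rrCoeff q i j)]
  simp only [piAlphaM_eq_qPochhammerInf, natCast_rpow_neg_mul_div_two_eq_pow]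
  refine ⟨?_, fun j _ => ?_⟩
  · rw [rrCumWeight, ← range_eq_Ico]
    exact (hsum id).trans
      (sum_antidiagonal_rrCoeff (fun m => (one_sub_pow_succ_pos hq0 hq1 m).ne') n)
  · calc |rrCumWeight α M (n + 1) j|
        ≤ ∑ i ∈ Ico j (n + 1), |rrWeight α M (n + 1) i| := abs_sum_le_sum_abs _ _
      _ ≤ ∑ i ∈ range (n + 1), |rrWeight α M (n + 1) i| :=
          sum_le_sum_of_subset_of_nonneg (fun i hi => mem_range.2 (mem_Ico.1 hi).2)
            fun _ _ _ => abs_nonneg _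
      _ = ∑ p ∈ antidiagonal n, |rrCoeff q p.1 p.2| := hsum abs
      _ ≤ _ := sum_antidiagonal_abs_rrCoeff_le hq0 hq1 n
end

section
/- Let $Y$ be a random variable, $Z$ a random variable independent of $Y$, and $F$ a measurable function with $X = F(Z, Y) \in L^2$. Let $(Z_k)_{k \ge 1}$ be i.i.d. copies of $Z$ independent of $Y$, and let $f : \mathbb{R} \to \mathbb{R}$ be Lipschitz with constant $[f]_{\mathrm{Lip}}$. Then for every integer $K \ge 1$, $\left\| f\left(\E[X\,|\,Y]\right) - f\left(\frac{1}{K}\sum_{k=1}^K F(Z_k, Y)\right) \right\|_2^2 \le \frac{[f]_{\mathrm{Lip}}^2}{K}\left(\|X\|_2^2 - \|\E[X\,|\,Y]\|_2^2\right)$. -/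
/-!
Write `g y = E[F(Z, y)]`. Independence of `Z` and `Y` makes `g(Y)` a version of `E[X | Y]`, and
the centred samples `D_k = F(Z_k, Y) - g(Y)` satisfy `E[D_k | W] = 0` for every `W` that determines
`Y` and is independent of `Z_k`. Taking `W = Y` gives `E[D_k²] = E[X²] - E[g(Y)²]`; taking
`W = (Z_j, Y)` shows that the `D_k` are pairwise orthogonal in `L²`, so their mean over `K` samples
has second moment `(E[X²] - E[g(Y)²]) / K`. The Lipschitz bound on `f` transfers this to
`f(g(Y)) - f(mean)`.
-/

open Finset MeasureTheory ProbabilityTheory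

section General

variable {Ω : Type*} {mΩ : MeasurableSpace Ω} {μ : Measure Ω}

theorem condExp_ae_eq_integral_map_of_indepFun {β γ : Type*} [MeasurableSpace β]
    [MeasurableSpace γ] [StandardBorelSpace γ] [Nonempty γ] [IsProbabilityMeasure μ]
    {W : Ω → β} {Z : Ω → γ} {φ : β × γ → ℝ} (hW : Measurable W) (hZ : AEMeasurable Z μ)
    (hWZ : IndepFun W Z μ) (hφ : StronglyMeasurable φ)
    (hint : Integrable (fun ω => φ (W ω, Z ω)) μ) :
    μ[fun ω => φ (W ω, Z ω) | MeasurableSpace.comap W inferInstance] =ᵐ[μ]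
      fun ω => ∫ z, φ (W ω, z) ∂(μ.map Z) := by
  have hκ : condDistrib Z W μ =ᵐ[μ.map W] Kernel.const β (μ.map Z) := by
    refine condDistrib_ae_eq_of_measure_eq_compProd W hZ ?_
    rw [Measure.compProd_const, hWZ.map_prod_eq_prod_map_map hW.aemeasurable hZ]
  filter_upwards [condExp_prod_ae_eq_integral_condDistrib hW hZ hφ hint,
    ae_of_ae_map hW.aemeasurable hκ] with ω hω hκω
  rw [hω, hκω, Kernel.const_apply]

theorem integral_mul_eq_zero_of_condExp_ae_eq_zero [IsFiniteMeasure μ] {m : MeasurableSpace Ω}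
    (hm : m ≤ mΩ) {f g : Ω → ℝ} (hf : AEStronglyMeasurable[m] f μ) (hfg : Integrable (f * g) μ)
    (hg : Integrable g μ) (hg0 : μ[g | m] =ᵐ[μ] 0) :
    ∫ ω, f ω * g ω ∂μ = 0 := by
  calc ∫ ω, f ω * g ω ∂μ = ∫ ω, (μ[f * g | m]) ω ∂μ := (integral_condExp hm).symm
    _ = ∫ ω, (f * μ[g | m]) ω ∂μ :=
      integral_congr_ae (condExp_mul_of_aestronglyMeasurable_left hf hfg hg)
    _ = 0 := integral_eq_zero_of_ae (by filter_upwards [hg0] with ω hω; simp [hω])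

theorem integral_sq_sum_eq_sum_integral_sq {ι : Type*} (s : Finset ι) {D : ι → Ω → ℝ}
    (hD : ∀ i ∈ s, MemLp (D i) 2 μ)
    (horth : ∀ i ∈ s, ∀ j ∈ s, i ≠ j → ∫ ω, D i ω * D j ω ∂μ = 0) :
    ∫ ω, (∑ i ∈ s, D i ω) ^ 2 ∂μ = ∑ i ∈ s, ∫ ω, D i ω ^ 2 ∂μ := by
  classical
  have hint : ∀ i ∈ s, ∀ j ∈ s, Integrable (fun ω => D i ω * D j ω) μ :=
    fun i hi j hj => (hD i hi).integrable_mul (hD j hj)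
  simp_rw [sq, sum_mul_sum]
  rw [integral_finsetSum _ fun i hi => integrable_finsetSum _ fun j hj => hint i hi j hj]
  refine sum_congr rfl fun i hi => ?_
  rw [integral_finsetSum _ fun j hj => hint i hi j hj, sum_eq_single_of_mem i hi]
  exact fun j hj hji => horth i hi j hj hji.symm

theorem integral_sq_sub_comp_le_of_lipschitzWith {f : ℝ → ℝ} {L : NNReal}
    (hf : LipschitzWith L f) {u v : Ω → ℝ} (huv : Integrable (fun ω => (u ω - v ω) ^ 2) μ) :
    ∫ ω, (f (u ω) - f (v ω)) ^ 2 ∂μ ≤ (L : ℝ) ^ 2 * ∫ ω, (u ω - v ω) ^ 2 ∂μ := by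
  rw [← integral_const_mul]
  refine integral_mono_of_nonneg (ae_of_all _ fun ω => sq_nonneg _) (huv.const_mul _)
    (ae_of_all _ fun ω => ?_)
  have h := hf.dist_le_mul (u ω) (v ω)
  rw [Real.dist_eq, Real.dist_eq] at h
  calc (f (u ω) - f (v ω)) ^ 2 = |f (u ω) - f (v ω)| ^ 2 := (sq_abs _).symm
    _ ≤ ((L : ℝ) * |u ω - v ω|) ^ 2 := by gcongr
    _ = (L : ℝ) ^ 2 * (u ω - v ω) ^ 2 := by rw [mul_pow, sq_abs]

end General

section NestedMonteCarlo

variable {Ω E : Type*} {mΩ : MeasurableSpace Ω} [MeasurableSpace E]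

noncomputable def innerMean (μ : Measure Ω) (Z : Ω → E) (F : E → E → ℝ) (y : E) : ℝ :=
  ∫ z, F z y ∂(μ.map Z)

variable {μ : Measure Ω} [IsProbabilityMeasure μ] {Y Z : Ω → E} {Zk : ℕ → Ω → E}
  {F : E → E → ℝ}

theorem stronglyMeasurable_innerMean (hF : Measurable fun p : E × E => F p.1 p.2) :
    StronglyMeasurable (innerMean μ Z F) :=
  hF.stronglyMeasurable.integral_prod_left'

theorem memLp_comp_of_identDistrib {Z' : Ω → E} (hY : Measurable Y)
    (hF : Measurable fun p : E × E => F p.1 p.2) (hid : IdentDistrib Z' Z μ μ)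
    (hYZ' : IndepFun Y Z' μ) (hZY : IndepFun Z Y μ) (hX : MemLp (fun ω => F (Z ω) (Y ω)) 2 μ) :
    MemLp (fun ω => F (Z' ω) (Y ω)) 2 μ :=
  ((hid.prodMk (.refl hY.aemeasurable) hYZ'.symm hZY).comp hF).memLp_iff.2 hX

variable [StandardBorelSpace E] [Nonempty E]

theorem condExp_ae_eq_innerMean (hY : Measurable Y) (hZ : Measurable Z)
    (hF : Measurable fun p : E × E => F p.1 p.2) (hZY : IndepFun Z Y μ)
    (hX : Integrable (fun ω => F (Z ω) (Y ω)) μ) :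
    μ[fun ω => F (Z ω) (Y ω) | MeasurableSpace.comap Y inferInstance] =ᵐ[μ]
      fun ω => innerMean μ Z F (Y ω) :=
  condExp_ae_eq_integral_map_of_indepFun (φ := fun p => F p.2 p.1) hY hZ.aemeasurable hZY.symm
    (hF.comp measurable_swap).stronglyMeasurable hX

theorem memLp_innerMean_comp (hY : Measurable Y) (hZ : Measurable Z)
    (hF : Measurable fun p : E × E => F p.1 p.2) (hZY : IndepFun Z Y μ)
    (hX : MemLp (fun ω => F (Z ω) (Y ω)) 2 μ) :
    MemLp (fun ω => innerMean μ Z F (Y ω)) 2 μ :=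
  (hX.condExp one_le_two).ae_eq
    (condExp_ae_eq_innerMean hY hZ hF hZY (hX.integrable one_le_two))

theorem condExp_sub_innerMean_ae_eq_zero {β : Type*} [MeasurableSpace β] {Z' : Ω → E}
    {W : Ω → β} {h : β → E} (hF : Measurable fun p : E × E => F p.1 p.2) (hW : Measurable W)
    (hh : Measurable h) (hid : IdentDistrib Z' Z μ μ) (hWZ' : IndepFun W Z' μ)
    (hint : Integrable (fun ω => F (Z' ω) (h (W ω)) - innerMean μ Z F (h (W ω))) μ) :
    μ[fun ω => F (Z' ω) (h (W ω)) - innerMean μ Z F (h (W ω)) |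
      MeasurableSpace.comap W inferInstance] =ᵐ[μ] 0 := by
  have : IsProbabilityMeasure (μ.map Z) := Measure.isProbabilityMeasure_map hid.aemeasurable_snd
  have hφ : Measurable fun p : β × E => F p.2 (h p.1) - innerMean μ Z F (h p.1) :=
    (hF.comp (measurable_snd.prodMk (hh.comp measurable_fst))).sub
      ((stronglyMeasurable_innerMean hF).measurable.comp (hh.comp measurable_fst))
  refine (condExp_ae_eq_integral_map_of_indepFun hW hid.aemeasurable_fst hWZ'
    hφ.stronglyMeasurable hint).trans (ae_of_all _ fun ω => ?_)
  change ∫ z, (F z (h (W ω)) - ∫ z', F z' (h (W ω)) ∂(μ.map Z)) ∂(μ.map Z') = 0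
  rw [hid.map_eq, ← average_eq_integral (μ := μ.map Z) fun z' => F z' (h (W ω))]
  exact integral_sub_average _ _

theorem memLp_sub_innerMean {Z' : Ω → E} (hY : Measurable Y) (hZ : Measurable Z)
    (hF : Measurable fun p : E × E => F p.1 p.2) (hid : IdentDistrib Z' Z μ μ)
    (hYZ' : IndepFun Y Z' μ) (hZY : IndepFun Z Y μ) (hX : MemLp (fun ω => F (Z ω) (Y ω)) 2 μ) :
    MemLp (fun ω => F (Z' ω) (Y ω) - innerMean μ Z F (Y ω)) 2 μ :=
  (memLp_comp_of_identDistrib hY hF hid hYZ' hZY hX).sub (memLp_innerMean_comp hY hZ hF hZY hX)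

theorem integral_sub_innerMean_sq {Z' : Ω → E} (hY : Measurable Y) (hZ : Measurable Z)
    (hF : Measurable fun p : E × E => F p.1 p.2) (hid : IdentDistrib Z' Z μ μ)
    (hYZ' : IndepFun Y Z' μ) (hZY : IndepFun Z Y μ) (hX : MemLp (fun ω => F (Z ω) (Y ω)) 2 μ) :
    ∫ ω, (F (Z' ω) (Y ω) - innerMean μ Z F (Y ω)) ^ 2 ∂μ =
      ∫ ω, F (Z ω) (Y ω) ^ 2 ∂μ - ∫ ω, innerMean μ Z F (Y ω) ^ 2 ∂μ := by
  have hX' := memLp_comp_of_identDistrib hY hF hid hYZ' hZY hX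
  have hg := memLp_innerMean_comp hY hZ hF hZY hX
  have hD := memLp_sub_innerMean hY hZ hF hid hYZ' hZY hX
  have hgD : Integrable
      (fun ω => innerMean μ Z F (Y ω) * (F (Z' ω) (Y ω) - innerMean μ Z F (Y ω))) μ :=
    hg.integrable_mul hD
  have h2 : Integrable (fun ω => F (Z' ω) (Y ω) ^ 2 - 2 * (innerMean μ Z F (Y ω) *
      (F (Z' ω) (Y ω) - innerMean μ Z F (Y ω)))) μ :=
    hX'.integrable_sq.sub (hgD.const_mul 2)
  have hsq : ∫ ω, F (Z' ω) (Y ω) ^ 2 ∂μ = ∫ ω, F (Z ω) (Y ω) ^ 2 ∂μ :=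
    ((hid.prodMk (.refl hY.aemeasurable) hYZ'.symm hZY).comp (hF.pow_const 2)).integral_eq
  have horth : ∫ ω, innerMean μ Z F (Y ω) * (F (Z' ω) (Y ω) - innerMean μ Z F (Y ω)) ∂μ = 0 :=
    integral_mul_eq_zero_of_condExp_ae_eq_zero hY.comap_le
      ((stronglyMeasurable_innerMean hF).measurable.comp (comap_measurable Y)).aestronglyMeasurable
      hgD (hD.integrable one_le_two)
      (condExp_sub_innerMean_ae_eq_zero (h := id) hF hY measurable_id hid hYZ'
        (hD.integrable one_le_two))
  calc ∫ ω, (F (Z' ω) (Y ω) - innerMean μ Z F (Y ω)) ^ 2 ∂μ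
      = ∫ ω, F (Z' ω) (Y ω) ^ 2 - 2 * (innerMean μ Z F (Y ω) *
          (F (Z' ω) (Y ω) - innerMean μ Z F (Y ω))) - innerMean μ Z F (Y ω) ^ 2 ∂μ :=
        integral_congr_ae (ae_of_all _ fun ω => by ring)
    _ = ∫ ω, F (Z ω) (Y ω) ^ 2 ∂μ - ∫ ω, innerMean μ Z F (Y ω) ^ 2 ∂μ := by
      rw [integral_sub h2 hg.integrable_sq,
        integral_sub hX'.integrable_sq (hgD.const_mul 2), integral_const_mul, horth, hsq]
      ring

theorem integral_sub_innerMean_mul_eq_zero (hY : Measurable Y) (hZk : ∀ k, Measurable (Zk k))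
    (hF : Measurable fun p : E × E => F p.1 p.2)
    (hindep : iIndepFun (fun i : Option ℕ => i.elim Y Zk) μ) {j k : ℕ} (hjk : j ≠ k)
    (hid : IdentDistrib (Zk k) Z μ μ)
    (hDj : MemLp (fun ω => F (Zk j ω) (Y ω) - innerMean μ Z F (Y ω)) 2 μ)
    (hDk : MemLp (fun ω => F (Zk k ω) (Y ω) - innerMean μ Z F (Y ω)) 2 μ) :
    ∫ ω, (F (Zk j ω) (Y ω) - innerMean μ Z F (Y ω)) *
      (F (Zk k ω) (Y ω) - innerMean μ Z F (Y ω)) ∂μ = 0 := by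
  have hW : Measurable fun ω => (Zk j ω, Y ω) := (hZk j).prodMk hY
  have hmeas : ∀ i : Option ℕ, Measurable (i.elim Y Zk) := by
    rintro (_ | i)
    exacts [hY, hZk i]
  have hWZk : IndepFun (fun ω => (Zk j ω, Y ω)) (Zk k) μ :=
    hindep.indepFun_prodMk hmeas (some j) none (some k) (by simpa using hjk) (by simp)
  have hφ : Measurable fun p : E × E => F p.1 p.2 - innerMean μ Z F p.2 :=
    hF.sub ((stronglyMeasurable_innerMean hF).measurable.comp measurable_snd)
  exact integral_mul_eq_zero_of_condExp_ae_eq_zero hW.comap_le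
    (hφ.comp (comap_measurable _)).aestronglyMeasurable (hDj.integrable_mul hDk)
    (hDk.integrable one_le_two)
    (condExp_sub_innerMean_ae_eq_zero (h := Prod.snd) hF hW measurable_snd hid hWZk
      (hDk.integrable one_le_two))

theorem memLp_innerMean_sub_average (hY : Measurable Y) (hZ : Measurable Z)
    (hF : Measurable fun p : E × E => F p.1 p.2)
    (hindep : iIndepFun (fun i : Option ℕ => i.elim Y Zk) μ) (hid : ∀ k, IdentDistrib (Zk k) Z μ μ)
    (hZY : IndepFun Z Y μ) (hX : MemLp (fun ω => F (Z ω) (Y ω)) 2 μ) (K : ℕ) :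
    MemLp (fun ω => innerMean μ Z F (Y ω) - (K : ℝ)⁻¹ * ∑ k ∈ range K, F (Zk k ω) (Y ω)) 2 μ :=
  (memLp_innerMean_comp hY hZ hF hZY hX).sub <|
    (memLp_finsetSum _ fun k _ => memLp_comp_of_identDistrib hY hF (hid k)
      (hindep.indepFun (i := none) (j := some k) (by simp)) hZY hX).const_mul _

theorem integral_innerMean_sub_average_sq (hY : Measurable Y) (hZ : Measurable Z)
    (hZk : ∀ k, Measurable (Zk k)) (hF : Measurable fun p : E × E => F p.1 p.2)
    (hindep : iIndepFun (fun i : Option ℕ => i.elim Y Zk) μ) (hid : ∀ k, IdentDistrib (Zk k) Z μ μ)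
    (hZY : IndepFun Z Y μ) (hX : MemLp (fun ω => F (Z ω) (Y ω)) 2 μ) {K : ℕ} (hK : K ≠ 0) :
    ∫ ω, (innerMean μ Z F (Y ω) - (K : ℝ)⁻¹ * ∑ k ∈ range K, F (Zk k ω) (Y ω)) ^ 2 ∂μ =
      (∫ ω, F (Z ω) (Y ω) ^ 2 ∂μ - ∫ ω, innerMean μ Z F (Y ω) ^ 2 ∂μ) / K := by
  have hYZk : ∀ k, IndepFun Y (Zk k) μ := fun k =>
    hindep.indepFun (i := none) (j := some k) (by simp)
  have hD := fun k => memLp_sub_innerMean hY hZ hF (hid k) (hYZk k) hZY hX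
  have hmean : ∀ ω, innerMean μ Z F (Y ω) - (K : ℝ)⁻¹ * ∑ k ∈ range K, F (Zk k ω) (Y ω) =
      -((K : ℝ)⁻¹ * ∑ k ∈ range K, (F (Zk k ω) (Y ω) - innerMean μ Z F (Y ω))) := by
    intro ω
    rw [sum_sub_distrib, sum_const, card_range, nsmul_eq_mul]
    field_simp
    ring
  simp_rw [hmean, neg_sq, mul_pow]
  rw [integral_const_mul, integral_sq_sum_eq_sum_integral_sq _ (fun k _ => hD k)
    (fun j _ k _ hjk =>
      integral_sub_innerMean_mul_eq_zero hY hZk hF hindep hjk (hid k) (hD j) (hD k)),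
    sum_congr rfl fun k _ => integral_sub_innerMean_sq hY hZ hF (hid k) (hYZk k) hZY hX,
    sum_const, card_range, nsmul_eq_mul]
  field_simp

end NestedMonteCarlo

theorem nested_strong_error_general {Ω : Type*} [MeasureSpace Ω]
    [IsProbabilityMeasure (ℙ : Measure Ω)]
    (Y Z : Ω → ℝ) (Zk : ℕ → Ω → ℝ) (F : ℝ → ℝ → ℝ) (f : ℝ → ℝ) (L : NNReal)
    (hY : Measurable Y) (hZ : Measurable Z) (hZk : ∀ k, Measurable (Zk k))
    (hF : Measurable fun p : ℝ × ℝ => F p.1 p.2)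
    (hf : LipschitzWith L f)
    -- the `Z_k` together with `Y` form an independent family
    (hindep : iIndepFun
      (fun i : Option ℕ => i.elim Y Zk) ℙ)
    -- each `Z_k` is a copy of `Z`
    (hid : ∀ k, IdentDistrib (Zk k) Z ℙ ℙ)
    -- `Z` is independent of `Y`
    (hZY : IndepFun Z Y ℙ)
    (hX : MemLp (fun ω => F (Z ω) (Y ω)) 2 ℙ)
    (K : ℕ) (hK : 1 ≤ K) :
    ∫ ω,
        (f ((ℙ[(fun ω' => F (Z ω') (Y ω')) | MeasurableSpace.comap Y inferInstance]) ω) -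
            f ((K : ℝ)⁻¹ * ∑ k ∈ range K, F (Zk k ω) (Y ω))) ^ 2 ∂ℙ ≤
      (L : ℝ) ^ 2 / K *
        ((∫ ω, (F (Z ω) (Y ω)) ^ 2 ∂ℙ) -
          ∫ ω, ((ℙ[(fun ω' => F (Z ω') (Y ω')) | MeasurableSpace.comap Y inferInstance]) ω) ^ 2 ∂ℙ) := by
  set m := ℙ[(fun ω' => F (Z ω') (Y ω')) | MeasurableSpace.comap Y inferInstance]
  have hcond : m =ᵐ[ℙ] fun ω => innerMean ℙ Z F (Y ω) :=
    condExp_ae_eq_innerMean hY hZ hF hZY (hX.integrable one_le_two)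
  have hsq : ∫ ω, m ω ^ 2 ∂ℙ = ∫ ω, innerMean ℙ Z F (Y ω) ^ 2 ∂ℙ :=
    integral_congr_ae (hcond.mono fun ω hω => congrArg (· ^ 2) hω)
  calc _ = ∫ ω, (f (innerMean ℙ Z F (Y ω)) -
        f ((K : ℝ)⁻¹ * ∑ k ∈ range K, F (Zk k ω) (Y ω))) ^ 2 ∂ℙ :=
        integral_congr_ae (hcond.mono fun ω hω => by simp only [hω])
    _ ≤ (L : ℝ) ^ 2 * ∫ ω, (innerMean ℙ Z F (Y ω) -
        (K : ℝ)⁻¹ * ∑ k ∈ range K, F (Zk k ω) (Y ω)) ^ 2 ∂ℙ :=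
      integral_sq_sub_comp_le_of_lipschitzWith hf
        (memLp_innerMean_sub_average hY hZ hF hindep hid hZY hX K).integrable_sq
    _ = _ := by
      rw [integral_innerMean_sub_average_sq hY hZ hZk hF hindep hid hZY hX (by omega),
        hsq]
      ring

theorem nested_strong_error {Ω : Type*} [MeasureSpace Ω]
    [IsProbabilityMeasure (ℙ : Measure Ω)]
    (Y Z : Ω → ℝ) (Zk : ℕ → Ω → ℝ) (F : ℝ → ℝ → ℝ) (f : ℝ → ℝ) (L : NNReal)
    (hY : Measurable Y) (hZ : Measurable Z) (hZk : ∀ k, Measurable (Zk k))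
    (hF : Measurable fun p : ℝ × ℝ => F p.1 p.2)
    (hf : LipschitzWith L f)
    -- the `Z_k` together with `Y` form an independent family
    (hindep : iIndepFun
      (fun i : Option ℕ => i.elim Y Zk) ℙ)
    -- each `Z_k` is a copy of `Z`
    (hid : ∀ k, IdentDistrib (Zk k) Z ℙ ℙ)
    -- `Z` is independent of `Y`
    (hZY : IndepFun Z Y ℙ)
    (hX : MemLp (fun ω => F (Z ω) (Y ω)) 2 ℙ)
    (hXk : ∀ k, MemLp (fun ω => F (Zk k ω) (Y ω)) 2 ℙ)
    (K : ℕ) (hK : 1 ≤ K) :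
    ∫ ω,
        (f ((ℙ[(fun ω' => F (Z ω') (Y ω')) | MeasurableSpace.comap Y inferInstance]) ω) -
            f ((K : ℝ)⁻¹ * ∑ k ∈ range K, F (Zk k ω) (Y ω))) ^ 2 ∂ℙ ≤
      (L : ℝ) ^ 2 / K *
        ((∫ ω, (F (Z ω) (Y ω)) ^ 2 ∂ℙ) -
          ∫ ω, ((ℙ[(fun ω' => F (Z ω') (Y ω')) | MeasurableSpace.comap Y inferInstance]) ω) ^ 2 ∂ℙ) :=
  nested_strong_error_general Y Z Zk F f L hY hZ hZk hF hf hindep hid hZY hX K hK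
end

section
/- Let $\alpha > 0$, $1 = n_1 < n_2 < \dots < n_R$ integers, and suppose the family $(\E[Y_h])_{h}$ admits the expansion $\E[Y_h] = \E[Y_0] + \sum_{k=1}^R c_k h^{\alpha k} + h^{\alpha R}\eta_R(h)$ with $\eta_R(h) \to 0$ as $h \to 0$. With the Richardson–Romberg weights $\w$ (solving the Vandermonde system $V(1, n_2^{-\alpha}, \dots, n_R^{-\alpha})\w = e_1$), one has $\E\left[\sum_{i=1}^R \w_i Y_{h/n_i}\right] = \E[Y_0] + c_R \frac{(-1)^{R-1}}{(\prod_i n_i)^\alpha}\, h^{\alpha R}\,(1 + \eta_{R,\underline{n}}(h))$ where $\eta_{R,\underline{n}}(h) \to 0$ as $h \to 0$ (assuming $c_R \ne 0$). -/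
/-!
Write `x_i = n_i^{-α}`. Then
`I(h/n_i) = I0 + ∑_{k=1}^R c_k h^{αk} x_i^k + h^{αR} x_i^R η(h/n_i)`, and the Vandermonde
system says that the weights fix the moment `x^0` and annihilate `x^k` for `1 ≤ k < R`, so only
the constant term and the order-`R` term survive. The surviving moment is computed by applying
the weights to `p = ∏_j (X - x_j)`, which vanishes at every node:
`0 = ∑_i w_i x_i^R + p(0)`, so `∑_i w_i x_i^R = -p(0) = (-1)^{R-1} ∏_i x_i`.
-/

open Finset Filter Polynomial Topology

section Moments

variable {K : Type*} [CommRing K] {R : ℕ} {w x : ℕ → K}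

theorem sum_mul_sum_mul_pow_of_moments
    (hw : ∀ k < R, ∑ i ∈ range R, w i * x i ^ k = if k = 0 then 1 else 0)
    {s : Finset ℕ} (hs : s ⊆ range R) (a : ℕ → K) :
    ∑ k ∈ s, a k * ∑ i ∈ range R, w i * x i ^ k = if 0 ∈ s then a 0 else 0 := by
  rw [sum_congr rfl fun k hk => by rw [hw k (mem_range.1 (hs hk))]]
  simp only [mul_ite, mul_one, mul_zero, sum_ite_eq']

theorem sum_mul_pow_card_of_moments (hR : R ≠ 0)
    (hw : ∀ k < R, ∑ i ∈ range R, w i * x i ^ k = if k = 0 then 1 else 0) :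
    ∑ i ∈ range R, w i * x i ^ R = (-1) ^ (R - 1) * ∏ i ∈ range R, x i := by
  nontriviality K
  set p : K[X] := ∏ j ∈ range R, (X - C (x j))
  have hp : p.Monic := monic_prod_of_monic _ _ fun j _ => monic_X_sub_C (x j)
  have hpR : p.natDegree = R := by
    rw [natDegree_prod_of_monic _ _ fun j _ => monic_X_sub_C (x j)]
    simp
  have hroot : ∀ i ∈ range R, x i ^ R + ∑ k ∈ range R, p.coeff k * x i ^ k = 0 := by
    intro i hi
    have : p.eval (x i) = 0 := by
      rw [eval_prod]
      exact prod_eq_zero hi (by simp)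
    rw [eval_eq_sum_range, sum_range_succ, hp.coeff_natDegree, one_mul, add_comm, hpR] at this
    exact this
  have hcoeff : p.coeff 0 = (-1) ^ R * ∏ i ∈ range R, x i := by
    rw [coeff_zero_eq_eval_zero, eval_prod]
    simp [prod_neg]
  have hwp : ∑ i ∈ range R, w i * x i ^ R + p.coeff 0 = 0 := calc
    _ = ∑ i ∈ range R, w i * (x i ^ R + ∑ k ∈ range R, p.coeff k * x i ^ k) := by
        have h0 := sum_mul_sum_mul_pow_of_moments hw subset_rfl p.coeff
        rw [if_pos (mem_range.2 (Nat.pos_of_ne_zero hR))] at h0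
        simp only [mul_add, sum_add_distrib, ← h0, mul_sum]
        rw [sum_comm (s := range R)]
        exact congrArg _ (sum_congr rfl fun k _ => sum_congr rfl fun i _ => by ring)
    _ = 0 := sum_eq_zero fun i hi => by rw [hroot i hi, mul_zero]
  have hsign : (-1 : K) ^ R = -(-1) ^ (R - 1) := by
    obtain ⟨m, rfl⟩ := Nat.exists_eq_add_one_of_ne_zero hR
    rw [Nat.add_sub_cancel, pow_succ, mul_neg_one]
  rw [hcoeff, hsign] at hwp
  linear_combination hwp

theorem sum_mul_expansion_of_moments (hR : R ≠ 0)
    (hw : ∀ k < R, ∑ i ∈ range R, w i * x i ^ k = if k = 0 then 1 else 0)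
    (b : K) (a e : ℕ → K) :
    ∑ i ∈ range R, w i * (b + ∑ k ∈ Icc 1 R, a k * x i ^ k + e i) =
      b + a R * ((-1) ^ (R - 1) * ∏ i ∈ range R, x i) + ∑ i ∈ range R, w i * e i := by
  have hb : ∑ i ∈ range R, w i = 1 := by simpa using hw 0 (Nat.pos_of_ne_zero hR)
  have hlow := sum_mul_sum_mul_pow_of_moments hw (s := Ico 1 R)
    (fun k hk => mem_range.2 (mem_Ico.1 hk).2) a
  rw [if_neg (by simp)] at hlow
  have hmid : ∑ i ∈ range R, w i * ∑ k ∈ Icc 1 R, a k * x i ^ k =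
      a R * ((-1) ^ (R - 1) * ∏ i ∈ range R, x i) := by
    calc _ = ∑ k ∈ Icc 1 R, a k * ∑ i ∈ range R, w i * x i ^ k := by
          simp only [mul_sum]
          rw [sum_comm]
          exact sum_congr rfl fun k _ => sum_congr rfl fun i _ => by ring
      _ = _ := by
        rw [← Ico_add_one_right_eq_Icc, sum_Ico_succ_top (Nat.one_le_iff_ne_zero.2 hR), hlow,
          sum_mul_pow_card_of_moments hR hw, zero_add]
  simp only [mul_add, sum_add_distrib, ← sum_mul, hb, one_mul, hmid]

end Moments

theorem tendsto_div_const_nhdsGT_zero {a : ℝ} (ha : 0 < a) :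
    Tendsto (fun h : ℝ => h / a) (𝓝[>] 0) (𝓝[>] 0) := by
  refine tendsto_nhdsWithin_iff.2
    ⟨?_, eventually_nhdsWithin_of_forall fun h hh => div_pos hh ha⟩
  simpa using (tendsto_id.div_const a).mono_left (nhdsWithin_le_nhds (a := (0 : ℝ)))

theorem Real.div_rpow_mul_natCast {h a : ℝ} (hh : 0 ≤ h) (ha : 0 < a) (α : ℝ) (k : ℕ) :
    (h / a) ^ (α * k) = h ^ (α * k) * (a ^ (-α)) ^ k := by
  rw [← Real.rpow_mul_natCast ha.le, Real.div_rpow hh ha.le, neg_mul, Real.rpow_neg ha.le,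
    div_eq_mul_inv]

theorem multistep_bias_expansion_general (α : ℝ) (R : ℕ) (hR : 1 ≤ R)
    (n : ℕ → ℕ) (hn0 : n 0 = 1) (hmono : ∀ i j, i < j → j < R → n i < n j)
    (I : ℝ → ℝ) (I0 : ℝ) (c : ℕ → ℝ) (hcR : c R ≠ 0) (η : ℝ → ℝ)
    (hη : Tendsto η (nhdsWithin 0 (Set.Ioi 0)) (nhds 0))
    (hI : ∀ h : ℝ, 0 < h →
      I h = I0 + (∑ k ∈ Icc 1 R, c k * h ^ (α * k)) + h ^ (α * R) * η h)
    (w : ℕ → ℝ)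
    (hw : ∀ k < R,
      ∑ i ∈ range R, w i * (n i : ℝ) ^ (-(α * k)) = if k = 0 then 1 else 0) :
    ∃ η' : ℝ → ℝ, Tendsto η' (nhdsWithin 0 (Set.Ioi 0)) (nhds 0) ∧
      ∀ h : ℝ, 0 < h →
        ∑ i ∈ range R, w i * I (h / (n i : ℝ)) =
          I0 + c R * ((-1 : ℝ) ^ (R - 1) / (∏ i ∈ range R, (n i : ℝ)) ^ α) *
            h ^ (α * R) * (1 + η' h) := by
  have hn : ∀ i ∈ range R, 0 < (n i : ℝ) := fun i hi => by
    rcases Nat.eq_zero_or_pos i with rfl | hi0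
    · simp [hn0]
    · exact_mod_cast (Nat.zero_le _).trans_lt (hmono 0 i hi0 (mem_range.1 hi))
  set x : ℕ → ℝ := fun i => (n i : ℝ) ^ (-α)
  have hx : ∀ k < R, ∑ i ∈ range R, w i * x i ^ k = if k = 0 then 1 else 0 := fun k hk => by
    rw [← hw k hk]
    exact sum_congr rfl fun i hi => by rw [← Real.rpow_mul_natCast (hn i hi).le, neg_mul]
  set L := (-1 : ℝ) ^ (R - 1) / (∏ i ∈ range R, (n i : ℝ)) ^ α
  have hL : (-1) ^ (R - 1) * ∏ i ∈ range R, x i = L := by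
    rw [Real.finsetProd_rpow _ _ fun i hi => (hn i hi).le, Real.rpow_neg (prod_pos hn).le,
      ← div_eq_mul_inv]
  refine ⟨fun h => (∑ i ∈ range R, w i * x i ^ R * η (h / n i)) / (c R * L), ?_, ?_⟩
  · have hterm : ∀ i ∈ range R,
        Tendsto (fun h => w i * x i ^ R * η (h / n i)) (𝓝[>] 0) (𝓝 0) := fun i hi => by
      simpa using (hη.comp (tendsto_div_const_nhdsGT_zero (hn i hi))).const_mul (w i * x i ^ R)
    simpa using (tendsto_finsetSum _ hterm).div_const (c R * L)
  · intro h hh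
    have hexp : ∀ i ∈ range R, I (h / n i) =
        I0 + ∑ k ∈ Icc 1 R, c k * h ^ (α * k) * x i ^ k +
          h ^ (α * R) * (x i ^ R * η (h / n i)) := fun i hi => by
      simp only [hI _ (div_pos hh (hn i hi)), Real.div_rpow_mul_natCast hh.le (hn i hi),
        mul_assoc]
      rfl
    rw [sum_congr rfl fun i hi => by rw [hexp i hi], sum_mul_expansion_of_moments (by omega) hx,
      hL]
    have hL0 : L ≠ 0 :=
      div_ne_zero (pow_ne_zero _ (by norm_num)) (Real.rpow_pos_of_pos (prod_pos hn) α).ne'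
    field_simp
    rw [mul_add, mul_sum]
    simp only [mul_assoc]
    ring

/-- Multistep Richardson–Romberg bias cancellation: if `I h = E[Y_h]` admits a weak
error expansion of order `R` and the weights `w` solve the Vandermonde system, then
the extrapolated bias is of order `h^{αR}` with leading coefficient
`c_R (-1)^{R-1} / (∏ n_i)^α`. -/
theorem multistep_bias_expansion (α : ℝ) (hα : 0 < α) (R : ℕ) (hR : 1 ≤ R)
    (n : ℕ → ℕ) (hn0 : n 0 = 1) (hmono : ∀ i j, i < j → j < R → n i < n j)
    (I : ℝ → ℝ) (I0 : ℝ) (c : ℕ → ℝ) (hcR : c R ≠ 0) (η : ℝ → ℝ)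
    (hη : Tendsto η (nhdsWithin 0 (Set.Ioi 0)) (nhds 0))
    (hI : ∀ h : ℝ, 0 < h →
      I h = I0 + (∑ k ∈ Icc 1 R, c k * h ^ (α * k)) + h ^ (α * R) * η h)
    (w : ℕ → ℝ)
    (hw : ∀ k < R,
      ∑ i ∈ range R, w i * (n i : ℝ) ^ (-(α * k)) = if k = 0 then 1 else 0) :
    ∃ η' : ℝ → ℝ, Tendsto η' (nhdsWithin 0 (Set.Ioi 0)) (nhds 0) ∧
      ∀ h : ℝ, 0 < h →
        ∑ i ∈ range R, w i * I (h / (n i : ℝ)) =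
          I0 + c R * ((-1 : ℝ) ^ (R - 1) / (∏ i ∈ range R, (n i : ℝ)) ^ α) *
            h ^ (α * R) * (1 + η' h) :=
  multistep_bias_expansion_general α R hR n hn0 hmono I I0 c hcR η hη hI w hw
end
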